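/- Let d ∈ ℕ and let g : ℝ → ℝ be a polynomial of degree at most d such that g(t) ≥ ρ > 0 for all t ∈ [0,1]. Then there exists σ₀ ∈ ℕ such that for every σ ≥ σ₀ and every i ∈ {0,…,σ−1}, the Bernstein coefficients of g on the subinterval [i/σ, (i+1)/σ] are all strictly positive; that is, if c₀,…,c_d ∈ ℝ satisfy g((i+t)/σ) = Σ_{p=0}^{d} c_p B_p^d(t) for all t, then c_p > 0 for all p ∈ {0,…,d}. -/

import Mathlib

/-- The Bernstein basis polynomial `B_i^n(t) = C(n,i) tⁱ (1−t)^{n−i}` as a real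
function. -/
noncomputable def bern (n i : ℕ) (t : ℝ) : ℝ :=
  (n.choose i : ℝ) * t ^ i * (1 - t) ^ (n - i)

/-!
Write `x = i/σ` and `s = 1/σ`. The polynomial `t ↦ g (x + s t)` has monomial coefficients
`a₀ = g x ≥ ρ` and `aₖ = sᵏ g⁽ᵏ⁾(x) / k!` for `k ≥ 1`; by compactness of `[0,1]` the latter are
`O(s)` uniformly in `x`. Passing to the Bernstein basis through
`tᵏ = ∑ₚ C(p,k)/C(d,k) Bₚᵈ(t)` uses weights in `[0,1]`, equal to `1` for `k = 0`, so every
Bernstein coefficient is within `O(s)` of `g x ≥ ρ`, hence positive once `σ` is large.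
-/

open Polynomial Finset

lemma bern_eq_eval (n ν : ℕ) (t : ℝ) : bern n ν t = (bernsteinPolynomial ℝ n ν).eval t := by
  simp [bern, bernsteinPolynomial]

lemma sum_bern (n : ℕ) (t : ℝ) : ∑ ν ∈ range (n + 1), bern n ν t = 1 := by
  simpa [bern_eq_eval, eval_finsetSum] using congrArg (eval t) (bernsteinPolynomial.sum ℝ n)

lemma choose_mul_bern (d k j : ℕ) (t : ℝ) :
    ((k + j).choose k : ℝ) * bern d (k + j) t = d.choose k * t ^ k * bern (d - k) j t := by
  have hchoose : d.choose (k + j) * (k + j).choose k = d.choose k * (d - k).choose j := by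
    simpa using Nat.choose_mul (n := d) (k := k + j) (s := k) (Nat.le_add_right k j)
  have hchooseR : (d.choose (k + j) : ℝ) * (k + j).choose k = d.choose k * (d - k).choose j := by
    exact_mod_cast hchoose
  rw [bern, bern, show d - (k + j) = d - k - j by omega, pow_add]
  linear_combination t ^ k * t ^ j * (1 - t) ^ (d - k - j) * hchooseR

lemma sum_choose_mul_bern {d k : ℕ} (hk : k ≤ d) (t : ℝ) :
    ∑ p ∈ range (d + 1), (p.choose k : ℝ) * bern d p t = d.choose k * t ^ k := by
  rw [show d + 1 = k + (d - k + 1) by omega, sum_range_add]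
  have hlow : ∑ p ∈ range k, (p.choose k : ℝ) * bern d p t = 0 :=
    sum_eq_zero fun p hp => by simp [Nat.choose_eq_zero_of_lt (mem_range.mp hp)]
  rw [hlow, zero_add, sum_congr rfl fun j _ => choose_mul_bern d k j t, ← mul_sum, sum_bern,
    mul_one]

lemma eq_zero_of_sum_mul_bern_eq_zero {d : ℕ} {e : ℕ → ℝ}
    (h : ∀ t, ∑ p ∈ range (d + 1), e p * bern d p t = 0) {p : ℕ} (hp : p ≤ d) : e p = 0 := by
  set Q : ℝ[X] := ∑ p ∈ range (d + 1), C (e p) * bernsteinPolynomial ℝ d p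
  have hQ : Q = 0 := Polynomial.funext fun t => by
    simpa [Q, eval_finsetSum, bern_eq_eval] using h t
  induction p using Nat.strong_induction_on with
  | _ p ih =>
    -- the `p`-th derivative at `0` of `B_q^d` vanishes for `q > p` and not for `q = p`
    have h0 : (derivative^[p] Q).eval 0 = 0 := by rw [hQ]; simp
    simp only [Q, iterate_derivative_sum, iterate_derivative_C_mul, eval_finsetSum, eval_mul,
      eval_C] at h0
    rw [sum_eq_single p] at h0
    · exact (mul_eq_zero.mp h0).resolve_right
        (bernsteinPolynomial.iterate_derivative_at_0_ne_zero ℝ d p hp)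
    · intro q _ hqp
      rcases lt_or_gt_of_ne hqp with hlt | hgt
      · rw [ih q hlt (hlt.le.trans hp), zero_mul]
      · rw [bernsteinPolynomial.iterate_derivative_at_0_eq_zero_of_lt ℝ d hgt, mul_zero]
    · exact fun hnot => absurd (mem_range.mpr (Nat.lt_succ_of_le hp)) hnot

lemma eq_of_sum_mul_bern_eq {d : ℕ} {e f : ℕ → ℝ}
    (h : ∀ t, ∑ p ∈ range (d + 1), e p * bern d p t = ∑ p ∈ range (d + 1), f p * bern d p t)
    {p : ℕ} (hp : p ≤ d) : e p = f p :=
  sub_eq_zero.mp <| eq_zero_of_sum_mul_bern_eq_zero (e := fun p => e p - f p)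
    (fun t => by simp only [sub_mul, sum_sub_distrib, h, sub_self]) hp

noncomputable def bernsteinCoeff (d : ℕ) (q : ℝ[X]) (p : ℕ) : ℝ :=
  ∑ k ∈ range (d + 1), (p.choose k / d.choose k : ℝ) * q.coeff k

lemma eval_eq_sum_bernsteinCoeff_mul_bern {d : ℕ} {q : ℝ[X]} (hq : q.natDegree ≤ d) (t : ℝ) :
    q.eval t = ∑ p ∈ range (d + 1), bernsteinCoeff d q p * bern d p t := by
  simp only [bernsteinCoeff, sum_mul]
  rw [sum_comm, eval_eq_sum_range' (Nat.lt_succ_of_le hq)]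
  refine sum_congr rfl fun k hk => ?_
  have hkd : k ≤ d := Nat.lt_succ_iff.mp (mem_range.mp hk)
  have hchoose : (d.choose k : ℝ) ≠ 0 := by exact_mod_cast (Nat.choose_pos hkd).ne'
  calc q.coeff k * t ^ k
      = q.coeff k / d.choose k * ∑ p ∈ range (d + 1), (p.choose k : ℝ) * bern d p t := by
        rw [sum_choose_mul_bern hkd]; field_simp
    _ = _ := by rw [mul_sum]; exact sum_congr rfl fun p _ => by ring

lemma abs_bernsteinCoeff_sub_coeff_zero_le {d p : ℕ} (hp : p ≤ d) (q : ℝ[X]) :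
    |bernsteinCoeff d q p - q.coeff 0| ≤ ∑ k ∈ range d, |q.coeff (k + 1)| := by
  rw [bernsteinCoeff, sum_range_succ', Nat.choose_zero_right, Nat.choose_zero_right,
    Nat.cast_one, div_one, one_mul, add_sub_cancel_right]
  refine (abs_sum_le_sum_abs _ _).trans (sum_le_sum fun k hk => ?_)
  have hk : k + 1 ≤ d := mem_range.mp hk
  have hratio : (p.choose (k + 1) / d.choose (k + 1) : ℝ) ≤ 1 :=
    div_le_one_of_le₀ (by exact_mod_cast Nat.choose_le_choose (k + 1) hp) (by positivity)
  rw [abs_mul, abs_of_nonneg (by positivity)]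
  exact mul_le_of_le_one_left (abs_nonneg _) hratio

lemma natDegree_taylor_comp_C_mul_X_le (g : ℝ[X]) (x s : ℝ) :
    ((taylor x g).comp (C s * X)).natDegree ≤ g.natDegree :=
  natDegree_comp_le.trans <| by
    simpa [natDegree_taylor] using
      Nat.mul_le_mul_left g.natDegree ((natDegree_C_mul_le s X).trans natDegree_X_le)

lemma eval_taylor_comp_C_mul_X (g : ℝ[X]) (x s t : ℝ) :
    ((taylor x g).comp (C s * X)).eval t = g.eval (s * t + x) := by
  simp [taylor_eval]

lemma abs_bernsteinCoeff_taylor_comp_sub_le {d p : ℕ} (hp : p ≤ d) (g : ℝ[X]) (x : ℝ) {s : ℝ}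
    (hs₀ : 0 ≤ s) (hs₁ : s ≤ 1) :
    |bernsteinCoeff d ((taylor x g).comp (C s * X)) p - g.eval x|
      ≤ s * ∑ k ∈ range d, |(hasseDeriv (k + 1) g).eval x| := by
  have h := abs_bernsteinCoeff_sub_coeff_zero_le hp ((taylor x g).comp (C s * X))
  rw [comp_C_mul_X_coeff, taylor_coeff_zero, pow_zero, mul_one] at h
  simp only [comp_C_mul_X_coeff, taylor_coeff] at h
  refine h.trans ?_
  rw [mul_sum]
  refine sum_le_sum fun k _ => ?_
  rw [abs_mul, abs_of_nonneg (pow_nonneg hs₀ _), mul_comm s]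
  exact mul_le_mul_of_nonneg_left (pow_le_of_le_one hs₀ hs₁ k.succ_ne_zero) (abs_nonneg _)

/-- for a polynomial `g` of degree at most `d` with `g ≥ ρ > 0` on
`[0,1]`, all Bernstein coefficients of `g` on every subinterval `[i/σ, (i+1)/σ]`
are strictly positive once the subdivision is fine enough. -/
theorem subdivided_bernstein_coeffs_pos (d : ℕ) (g : Polynomial ℝ)
    (hdeg : g.natDegree ≤ d) (ρ : ℝ) (hρ : 0 < ρ)
    (hg : ∀ t ∈ Set.Icc (0:ℝ) 1, ρ ≤ g.eval t) :
    ∃ σ₀ : ℕ, ∀ σ : ℕ, σ₀ ≤ σ → ∀ i : ℕ, i < σ → ∀ c : ℕ → ℝ,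
      (∀ t : ℝ, g.eval (((i : ℝ) + t) / (σ : ℝ))
        = ∑ p ∈ Finset.range (d + 1), c p * bern d p t) →
      ∀ p ≤ d, 0 < c p := by
  obtain ⟨M, hM⟩ := (isCompact_Icc (a := (0 : ℝ)) (b := 1)).exists_bound_of_continuousOn
    (f := fun x => ∑ k ∈ range d, |(hasseDeriv (k + 1) g).eval x|) (by fun_prop)
  refine ⟨⌈M / ρ⌉₊ + 1, fun σ hσ i hi c hc p hp => ?_⟩
  have hMσ : M / ρ < σ := (Nat.le_ceil _).trans_lt (by exact_mod_cast hσ)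
  have hσ₀ : (0 : ℝ) < σ := by exact_mod_cast (Nat.zero_lt_of_lt hi)
  have hx : (i / σ : ℝ) ∈ Set.Icc 0 1 :=
    ⟨by positivity, (div_le_one hσ₀).mpr (by exact_mod_cast hi.le)⟩
  set q := (taylor (i / σ : ℝ) g).comp (C (σ : ℝ)⁻¹ * X)
  have hq : q.natDegree ≤ d := (natDegree_taylor_comp_C_mul_X_le g _ _).trans hdeg
  have hcq : c p = bernsteinCoeff d q p := eq_of_sum_mul_bern_eq (fun t => by
    rw [← hc t, ← eval_eq_sum_bernsteinCoeff_mul_bern hq, eval_taylor_comp_C_mul_X]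
    congr 1; field_simp; ring) hp
  have hclose := abs_bernsteinCoeff_taylor_comp_sub_le hp g (i / σ) (s := (σ : ℝ)⁻¹)
    (by positivity) (inv_le_one_of_one_le₀ (by exact_mod_cast Nat.one_le_of_lt hi))
  have hsmall : (σ : ℝ)⁻¹ * ∑ k ∈ range d, |(hasseDeriv (k + 1) g).eval (i / σ : ℝ)| < ρ := by
    rw [inv_mul_lt_iff₀ hσ₀]
    calc _ ≤ M := (le_abs_self _).trans (hM _ hx)
      _ < σ * ρ := (div_lt_iff₀ hρ).mp hMσ
  rw [hcq]
  linarith [(abs_le.mp hclose).1, hg _ hx]
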